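/- Let Block : ℝ^{n×d} → ℝ^{n×d} be a transformer block without layer normalization with skip connections around both its attention and MLP sublayers, Block(X) = Y + φ(Y·W_up)·W_down where Y = X + S_c(X, W_Q, W_K, W_V)·W_O, with W_Q ∈ GL(d), and consider the weight-shared L-layer transformer obtained by composing this same block L times. Then with Θ = W_Q, W̃_K = Θ⁻¹W_K, W̃_V = Θ⁻¹W_V, W̃_O = W_O·Θ, W̃_up = Θ⁻¹W_up, W̃_down = W_down·Θ, and B̃ the block built from query weight I_d and these weights, one has Block^{∘L}(X) = B̃^{∘L}(X·Θ)·Θ⁻¹ for all X ∈ ℝ^{n×d} and all L ≥ 1; hence the weight-shared transformer is functionally equivalent to a weight-shared transformer whose query weight is the identity, after absorbing Θ into the embedding and Θ⁻¹ into the LM head. -/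

import Mathlib

open scoped Matrix

/-- Causal softmax: `CS(A)_{pq} = exp(A_{pq}) / Σ_{r ≤ p} exp(A_{pr})` if `q ≤ p`, else `0`. -/
noncomputable def causalSoftmax {n : ℕ} (A : Matrix (Fin n) (Fin n) ℝ) :
    Matrix (Fin n) (Fin n) ℝ :=
  Matrix.of fun p q =>
    if q ≤ p then
      Real.exp (A p q) / ∑ r ∈ Finset.univ.filter (fun r => r ≤ p), Real.exp (A p r)
    else 0

/-- The `i`-th block of `d_k` consecutive columns (columns are indexed by `Fin h × Fin d_k`). -/
def blockCol {n h dk : ℕ} (i : Fin h) (M : Matrix (Fin n) (Fin h × Fin dk) ℝ) :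
    Matrix (Fin n) (Fin dk) ℝ :=
  Matrix.of fun p j => M p (i, j)

/-- Multi-head causal self-attention: per head `i`,
`CS((1/√d_k)(XW_Q)_i (XW_K)_iᵀ) (XW_V)_i`, concatenated over heads. -/
noncomputable def Sc {n h dk : ℕ} (X : Matrix (Fin n) (Fin h × Fin dk) ℝ)
    (WQ WK WV : Matrix (Fin h × Fin dk) (Fin h × Fin dk) ℝ) :
    Matrix (Fin n) (Fin h × Fin dk) ℝ :=
  Matrix.of fun p c =>
    (causalSoftmax ((1 / Real.sqrt dk) •
        (blockCol c.1 (X * WQ) * (blockCol c.1 (X * WK))ᵀ)) *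
      blockCol c.1 (X * WV)) p c.2


/-- A transformer block without layer normalization, with skip connections around both the
attention and the MLP: `Block(X) = Y + φ(Y · W_up) · W_down` where
`Y = X + S_c(X, W_Q, W_K, W_V) · W_O`. -/
noncomputable def blockFn {n h dk m : ℕ} (φ : ℝ → ℝ)
    (WQ WK WV WO : Matrix (Fin h × Fin dk) (Fin h × Fin dk) ℝ)
    (Wup : Matrix (Fin h × Fin dk) (Fin m) ℝ)
    (Wdown : Matrix (Fin m) (Fin h × Fin dk) ℝ)
    (X : Matrix (Fin n) (Fin h × Fin dk) ℝ) : Matrix (Fin n) (Fin h × Fin dk) ℝ :=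
  let Y := X + Sc X WQ WK WV * WO
  Y + ((Y * Wup).map φ) * Wdown

/-!
A change of basis `X ↦ X P` of the residual stream, compensated by `P⁻¹` on the input weights
and by `P` on the output weights, leaves every product `X W` seen by the block unchanged, so the
block is semiconjugated by right multiplication with `P`; semiconjugacy passes to iterates.
Taking `P = W_Q` turns the query weight into `W_Q⁻¹ W_Q = 1`.
-/

variable {n h dk m : ℕ}

lemma Sc_mul_right (X : Matrix (Fin n) (Fin h × Fin dk) ℝ)
    {P : Matrix (Fin h × Fin dk) (Fin h × Fin dk) ℝ} (hP : IsUnit P.det)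
    (WQ WK WV : Matrix (Fin h × Fin dk) (Fin h × Fin dk) ℝ) :
    Sc (X * P) (P⁻¹ * WQ) (P⁻¹ * WK) (P⁻¹ * WV) = Sc X WQ WK WV := by
  have cancel : ∀ W : Matrix (Fin h × Fin dk) (Fin h × Fin dk) ℝ, X * P * (P⁻¹ * W) = X * W :=
    fun W => by rw [Matrix.mul_assoc, Matrix.mul_nonsing_inv_cancel_left P _ hP]
  simp only [Sc, cancel]

lemma blockFn_mul_right (φ : ℝ → ℝ)
    (WQ WK WV WO : Matrix (Fin h × Fin dk) (Fin h × Fin dk) ℝ)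
    (Wup : Matrix (Fin h × Fin dk) (Fin m) ℝ) (Wdown : Matrix (Fin m) (Fin h × Fin dk) ℝ)
    {P : Matrix (Fin h × Fin dk) (Fin h × Fin dk) ℝ} (hP : IsUnit P.det)
    (X : Matrix (Fin n) (Fin h × Fin dk) ℝ) :
    blockFn φ (P⁻¹ * WQ) (P⁻¹ * WK) (P⁻¹ * WV) (WO * P) (P⁻¹ * Wup) (Wdown * P) (X * P) =
      blockFn φ WQ WK WV WO Wup Wdown X * P := by
  simp only [blockFn, Sc_mul_right X hP, Matrix.add_mul, Matrix.mul_assoc,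
    Matrix.mul_nonsing_inv_cancel_left P _ hP]

lemma semiconj_blockFn (φ : ℝ → ℝ)
    (WQ WK WV WO : Matrix (Fin h × Fin dk) (Fin h × Fin dk) ℝ)
    (Wup : Matrix (Fin h × Fin dk) (Fin m) ℝ) (Wdown : Matrix (Fin m) (Fin h × Fin dk) ℝ)
    {P : Matrix (Fin h × Fin dk) (Fin h × Fin dk) ℝ} (hP : IsUnit P.det) :
    Function.Semiconj (fun X : Matrix (Fin n) (Fin h × Fin dk) ℝ => X * P)
      (blockFn φ WQ WK WV WO Wup Wdown)
      (blockFn φ (P⁻¹ * WQ) (P⁻¹ * WK) (P⁻¹ * WV) (WO * P) (P⁻¹ * Wup) (Wdown * P)) :=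
  fun X => (blockFn_mul_right φ WQ WK WV WO Wup Wdown hP X).symm

/-- **Weight-Shared Query Elimination.** For the weight-shared `L`-layer transformer
(`L ≥ 1`) obtained by composing the same block `L` times,
`Block^[L](X) = B̃^[L](X · Θ) · Θ⁻¹` with `Θ = W_Q`, where `B̃` is the reduced block with
query weight `I` and weights `Θ⁻¹W_K, Θ⁻¹W_V, W_O Θ, Θ⁻¹W_up, W_down Θ`. -/
theorem weight_shared_query_elimination {n h dk m : ℕ} (φ : ℝ → ℝ)
    (WQ WK WV WO : Matrix (Fin h × Fin dk) (Fin h × Fin dk) ℝ)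
    (Wup : Matrix (Fin h × Fin dk) (Fin m) ℝ)
    (Wdown : Matrix (Fin m) (Fin h × Fin dk) ℝ)
    (hWQ : IsUnit WQ.det) :
    ∀ (X : Matrix (Fin n) (Fin h × Fin dk) ℝ) (L : ℕ), 1 ≤ L →
      (blockFn φ WQ WK WV WO Wup Wdown)^[L] X =
        (blockFn φ (1 : Matrix (Fin h × Fin dk) (Fin h × Fin dk) ℝ)
            (WQ⁻¹ * WK) (WQ⁻¹ * WV) (WO * WQ) (WQ⁻¹ * Wup) (Wdown * WQ))^[L] (X * WQ)
          * WQ⁻¹ := by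
  intro X L _
  have iterate_conj := (semiconj_blockFn (n := n) φ WQ WK WV WO Wup Wdown hWQ).iterate_right L X
  rw [Matrix.nonsing_inv_mul WQ hWQ] at iterate_conj
  rw [← iterate_conj, Matrix.mul_nonsing_inv_cancel_right _ _ hWQ]
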